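/- Let Λ = [[a,b],[c,d]] be a real 2×2 matrix with ad − bc = 1 and b > 0, and let f, g : ℝ → ℂ be integrable. Then the LCT convolution f ∗_Λ g is defined almost everywhere and integrable, and the convolution–multiplication property holds: for every ω ∈ ℝ, 𝓛_Λ[f ∗_Λ g](ω) = e^{−i d ω²/(2b)} · (𝓛_Λ f)(ω) · (𝓛_Λ g)(ω). -/

import Mathlib

/-!
With the chirp `φ_a(t) = exp (i a t² / (2b))`, the LCT of `f` is `φ_d(ω) / √(2πib)` times the
Fourier transform of `φ_a f` at `ω / (2πb)`, and `φ_a · (f ∗_Λ g)` is `1 / √(2πib)` times the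
ordinary convolution `(φ_a f) ⋆ (φ_a g)`. The Fourier convolution theorem therefore gives
`𝓛(f ∗_Λ g)(ω) = φ_d(ω) / (2πib) · 𝓕(φ_a f) · 𝓕(φ_a g)`, while the product `𝓛f · 𝓛g` carries
`φ_d(ω)` twice; the factor `exp (-i d ω² / (2b)) = φ_{-d}(ω)` removes the surplus one.
-/

open MeasureTheory Complex

noncomputable section

/-- The LCT kernel `k_Λ(t, ω) = (1/√(-2πib)) exp(-(i/(2b))(a t² + d ω² - 2 ω t))`,
where `√` is the principal branch of the complex square root. -/
def lctKernel (a b d : ℝ) (t ω : ℝ) : ℂ :=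
  (((-2 : ℂ) * (Real.pi : ℂ) * Complex.I * (b : ℂ)) ^ ((1 : ℂ) / 2))⁻¹ *
    Complex.exp (-(Complex.I / (2 * (b : ℂ))) *
      ((a : ℂ) * (t : ℂ) ^ 2 + (d : ℂ) * (ω : ℂ) ^ 2 - 2 * (ω : ℂ) * (t : ℂ)))

/-- The Linear Canonical Transform `(𝓛_Λ f)(ω) = ∫ f(t) conj (k_Λ(t,ω)) dt`. -/
def lct (a b d : ℝ) (f : ℝ → ℂ) (ω : ℝ) : ℂ :=
  ∫ t : ℝ, f t * (starRingEnd ℂ) (lctKernel a b d t ω)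

/-- The LCT convolution
`(f ∗_Λ g)(t) = (e^{-i a t²/(2b)} / √(2πib)) ∫ f(z) e^{i a z²/(2b)} g(t-z) e^{i a (t-z)²/(2b)} dz`. -/
def lctConv (a b : ℝ) (f g : ℝ → ℂ) (t : ℝ) : ℂ :=
  (Complex.exp (-Complex.I * (a : ℂ) * (t : ℂ) ^ 2 / (2 * (b : ℂ))) /
      ((2 * (Real.pi : ℂ) * Complex.I * (b : ℂ)) ^ ((1 : ℂ) / 2))) *
    ∫ z : ℝ, f z * Complex.exp (Complex.I * (a : ℂ) * (z : ℂ) ^ 2 / (2 * (b : ℂ))) *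
      g (t - z) * Complex.exp (Complex.I * (a : ℂ) * ((t : ℂ) - (z : ℂ)) ^ 2 / (2 * (b : ℂ)))

open scoped Convolution FourierTransform ComplexConjugate

def chirp (a b t : ℝ) : ℂ := exp (I * a * t ^ 2 / (2 * b))

def chirped (a b : ℝ) (f : ℝ → ℂ) (t : ℝ) : ℂ := f t * chirp a b t

def lctScale (b : ℝ) : ℂ := (2 * (Real.pi : ℂ) * I * b) ^ ((1 : ℂ) / 2)

lemma norm_chirp (a b t : ℝ) : ‖chirp a b t‖ = 1 := by
  rw [chirp, show I * a * t ^ 2 / (2 * b) = ((a * t ^ 2 / (2 * b) : ℝ) : ℂ) * I by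
    push_cast; ring, norm_exp_ofReal_mul_I]

lemma continuous_chirp (a b : ℝ) : Continuous (chirp a b) := by
  unfold chirp; fun_prop

lemma chirp_neg_mul_chirp (a b t : ℝ) : chirp (-a) b t * chirp a b t = 1 := by
  rw [chirp, chirp, ← exp_add]; push_cast; ring_nf; exact exp_zero

lemma MeasureTheory.Integrable.chirped {μ : Measure ℝ} {f : ℝ → ℂ} (hf : Integrable f μ)
    (a b : ℝ) : Integrable (chirped a b f) μ :=
  hf.mul_bdd (continuous_chirp a b).aestronglyMeasurable
    (.of_forall fun t => (norm_chirp a b t).le)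

lemma conj_cpow_neg_two_pi_I_mul (b : ℝ) :
    conj (((-2 : ℂ) * Real.pi * I * b) ^ ((1 : ℂ) / 2)) = lctScale b := by
  have harg : ((-2 : ℂ) * Real.pi * I * b).arg ≠ Real.pi := by
    simp [arg_eq_pi_iff]
  rw [lctScale, ← conj_conj ((1 : ℂ) / 2), ← conj_cpow _ _ harg]
  congr 1 <;> simp [map_ofNat]

lemma conj_lctKernel (a b d t ω : ℝ) :
    conj (lctKernel a b d t ω) = (lctScale b)⁻¹ * chirp d b ω *
      (exp (↑(-2 * Real.pi * t * (ω / (2 * Real.pi * b))) * I) * chirp a b t) := by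
  rw [lctKernel, map_mul, map_inv₀, conj_cpow_neg_two_pi_I_mul, ← exp_conj, chirp, chirp]
  simp only [mul_assoc, ← exp_add]
  congr 2
  simp only [map_mul, map_neg, map_div₀, map_sub, map_add, map_pow, conj_I, conj_ofReal,
    map_ofNat]
  push_cast
  field_simp
  ring

lemma lct_eq_fourier (a b d : ℝ) (f : ℝ → ℂ) (ω : ℝ) :
    lct a b d f ω = (lctScale b)⁻¹ * chirp d b ω * 𝓕 (chirped a b f) (ω / (2 * Real.pi * b)) := by
  rw [lct, Real.fourier_real_eq_integral_exp_smul, ← integral_const_mul]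
  congr with t
  rw [conj_lctKernel, smul_eq_mul, chirped]
  ring

lemma fourier_const_mul (c : ℂ) (h : ℝ → ℂ) (w : ℝ) :
    𝓕 (fun t => c * h t) w = c * 𝓕 h w :=
  congrFun (VectorFourier.fourierIntegral_const_smul _ _ _ h c) w

lemma lctConv_integrand_eq (a b : ℝ) (f g : ℝ → ℂ) (t z : ℝ) :
    f z * exp (I * a * z ^ 2 / (2 * b)) * g (t - z) * exp (I * a * ((t : ℂ) - z) ^ 2 / (2 * b)) =
      chirped a b f z * chirped a b g (t - z) := by
  simp only [chirped, chirp]; push_cast; ring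

lemma lctConv_eq_convolution (a b : ℝ) (f g : ℝ → ℂ) (t : ℝ) :
    lctConv a b f g t = (lctScale b)⁻¹ *
      chirped (-a) b (chirped a b f ⋆[ContinuousLinearMap.mul ℂ ℂ] chirped a b g) t := by
  rw [lctConv, chirped, convolution_def, mul_comm _ (chirp (-a) b t), ← mul_assoc]
  congr 1
  · rw [div_eq_inv_mul, lctScale, chirp]; push_cast; ring_nf
  · simp only [ContinuousLinearMap.mul_apply', lctConv_integrand_eq]

lemma chirped_lctConv (a b : ℝ) (f g : ℝ → ℂ) :
    chirped a b (lctConv a b f g) =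
      fun t => (lctScale b)⁻¹ * (chirped a b f ⋆[ContinuousLinearMap.mul ℂ ℂ] chirped a b g) t := by
  ext t
  rw [chirped, lctConv_eq_convolution, chirped, mul_assoc, mul_assoc, chirp_neg_mul_chirp, mul_one]

theorem lct_convolution_multiplication_general (a b d : ℝ)
    (f g : ℝ → ℂ) (hf : Integrable f) (hg : Integrable g) :
    (∀ᵐ t : ℝ, Integrable (fun z : ℝ =>
        f z * Complex.exp (Complex.I * (a : ℂ) * (z : ℂ) ^ 2 / (2 * (b : ℂ))) *
        g (t - z) * Complex.exp (Complex.I * (a : ℂ) * ((t : ℂ) - (z : ℂ)) ^ 2 / (2 * (b : ℂ))))) ∧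
    Integrable (lctConv a b f g) ∧
    ∀ ω : ℝ, lct a b d (lctConv a b f g) ω =
      Complex.exp (-Complex.I * (d : ℂ) * (ω : ℂ) ^ 2 / (2 * (b : ℂ))) *
        lct a b d f ω * lct a b d g ω := by
  have hF := hf.chirped a b
  have hG := hg.chirped a b
  refine ⟨?_, ?_, fun ω => ?_⟩
  · filter_upwards [hF.ae_convolution_exists (ContinuousLinearMap.mul ℂ ℂ) hG] with t ht
    simpa only [ConvolutionExistsAt, ContinuousLinearMap.mul_apply', lctConv_integrand_eq] using ht
  · have := ((hF.integrable_convolution (ContinuousLinearMap.mul ℂ ℂ) hG).chirped (-a) b).const_mul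
      (lctScale b)⁻¹
    simpa only [← lctConv_eq_convolution] using this
  · have hphase : exp (-I * d * ω ^ 2 / (2 * b)) = chirp (-d) b ω := by
      rw [chirp]; push_cast; ring_nf
    simp only [lct_eq_fourier, chirped_lctConv, fourier_const_mul,
      Real.fourier_mul_convolution_eq hF hG, hphase]
    linear_combination -(lctScale b)⁻¹ * (lctScale b)⁻¹ * chirp d b ω *
      𝓕 (chirped a b f) (ω / (2 * Real.pi * b)) * 𝓕 (chirped a b g) (ω / (2 * Real.pi * b)) *
        chirp_neg_mul_chirp d b ω

/-- **LCT convolution–multiplication property.**  For integrable `f, g`, the LCT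
convolution `f ∗_Λ g` is defined almost everywhere and integrable, and
`𝓛_Λ[f ∗_Λ g](ω) = e^{-i d ω²/(2b)} (𝓛_Λ f)(ω) (𝓛_Λ g)(ω)` for every `ω`. -/
theorem lct_convolution_multiplication (a b c d : ℝ) (hdet : a * d - b * c = 1) (hb : 0 < b)
    (f g : ℝ → ℂ) (hf : Integrable f) (hg : Integrable g) :
    (∀ᵐ t : ℝ, Integrable (fun z : ℝ =>
        f z * Complex.exp (Complex.I * (a : ℂ) * (z : ℂ) ^ 2 / (2 * (b : ℂ))) *
        g (t - z) * Complex.exp (Complex.I * (a : ℂ) * ((t : ℂ) - (z : ℂ)) ^ 2 / (2 * (b : ℂ))))) ∧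
    Integrable (lctConv a b f g) ∧
    ∀ ω : ℝ, lct a b d (lctConv a b f g) ω =
      Complex.exp (-Complex.I * (d : ℂ) * (ω : ℂ) ^ 2 / (2 * (b : ℂ))) *
        lct a b d f ω * lct a b d g ω :=
  lct_convolution_multiplication_general a b d f g hf hg
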